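/- arXiv:2510.02077 — 2 statements merged into one kernel-verified Lean document; each statement's English description precedes it below -/
import Mathlib

section
/- Let N^{sym} be the (n−1)×(n−1) real symmetric tridiagonal matrix with diagonal entries sᵢ = 1 + kᵢ + k_{i+1} and off-diagonal entries (N^{sym})_{i,i+1} = (N^{sym})_{i+1,i} = (1 + 2k_{i+1})/2, where k₁,…,kₙ are nonnegative integers. Then N^{sym} is positive definite. -/
/-!
With `c j = (1 + 2 k (j+1)) / 2 > 0`, the matrix factors as `Dᵀ * diagonal c * D`, where `D` is
the `(n+1) × n` matrix with ones in positions `(i, i)` and `(i+1, i)`. This is the paper's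
`BᵀB + c_n e eᵀ` with the rank-one term absorbed as the last row of `D`. The top `n × n` block
of `D` is unit lower triangular, so `D` is injective and the congruence is positive definite.
-/

open Matrix

def pathIncidence (R : Type*) [Zero R] [One R] (n : ℕ) : Matrix (Fin (n + 1)) (Fin n) R :=
  of fun j i => if j = i.castSucc ∨ j = i.succ then 1 else 0

namespace pathIncidence

variable {R : Type*} {n : ℕ}

theorem isLowerTriangular_submatrix_castSucc [Zero R] [One R] :
    ((pathIncidence R n).submatrix Fin.castSucc id).IsLowerTriangular := by
  intro j i hij
  have hji : (j : ℕ) < i := hij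
  simp only [pathIncidence, submatrix_apply, of_apply, id, Fin.ext_iff, Fin.val_castSucc,
    Fin.val_succ]
  rw [if_neg (by omega)]

theorem det_submatrix_castSucc [CommRing R] :
    ((pathIncidence R n).submatrix Fin.castSucc id).det = 1 := by
  rw [det_of_isLowerTriangular _ isLowerTriangular_submatrix_castSucc]
  simp [pathIncidence]

theorem mulVec_injective [CommRing R] [IsDomain R] :
    Function.Injective (pathIncidence R n).mulVec := by
  refine (injective_iff_map_eq_zero (pathIncidence R n).mulVecLin).2 fun x hx => ?_
  refine eq_zero_of_mulVec_eq_zero (M := (pathIncidence R n).submatrix Fin.castSucc id)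
    (by simp [det_submatrix_castSucc]) ?_
  funext j
  exact congrFun hx j.castSucc

theorem sum_apply_mul [NonAssocSemiring R] (i : Fin n) (f : Fin (n + 1) → R) :
    ∑ j, pathIncidence R n j i * f j = f i.castSucc + f i.succ := by
  have hD : ∀ j, pathIncidence R n j i =
      (if j = i.castSucc then 1 else 0) + (if j = i.succ then 1 else 0) := by
    intro j
    by_cases h : j = i.castSucc
    · simp [pathIncidence, h, (Fin.castSucc_lt_succ (i := i)).ne]
    · simp [pathIncidence, h]
  simp only [hD, add_mul, ite_mul, one_mul, zero_mul, Finset.sum_add_distrib,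
    Finset.sum_ite_eq', Finset.mem_univ, if_true]

theorem transpose_mul_diagonal_mul_apply [CommSemiring R] (w : Fin (n + 1) → R) (i i' : Fin n) :
    ((pathIncidence R n)ᵀ * diagonal w * pathIncidence R n) i i' =
      if i = i' then w i.castSucc + w i.succ
      else if (i : ℕ) + 1 = i' then w i'.castSucc
      else if (i' : ℕ) + 1 = i then w i.castSucc
      else 0 := by
  rw [mul_apply]
  simp only [mul_diagonal, transpose_apply, mul_assoc]
  rw [sum_apply_mul]
  simp only [pathIncidence, of_apply, Fin.ext_iff, Fin.val_castSucc, Fin.val_succ]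
  split_ifs <;> (try omega) <;> simp only [mul_one, mul_zero, zero_add, add_zero]
  exact congrArg w (Fin.ext ‹(i : ℕ) + 1 = i'›)

end pathIncidence

theorem Nsym_posDef (n : ℕ) (k : ℕ → ℕ) :
    (Matrix.of fun i j : Fin n =>
      if (i : ℕ) = (j : ℕ) then (1 : ℝ) + k ((i : ℕ) + 1) + k ((i : ℕ) + 2)
      else if (i : ℕ) + 1 = (j : ℕ) then (1 + 2 * (k ((j : ℕ) + 1) : ℝ)) / 2
      else if (j : ℕ) + 1 = (i : ℕ) then (1 + 2 * (k ((i : ℕ) + 1) : ℝ)) / 2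
      else 0).PosDef := by
  have hc : ∀ j : Fin (n + 1), 0 < (1 + 2 * (k (j + 1) : ℝ)) / 2 := fun j => by positivity
  convert (PosDef.diagonal hc).conjTranspose_mul_mul_same pathIncidence.mulVec_injective using 1
  ext i i'
  rw [conjTranspose_eq_transpose_of_trivial, pathIncidence.transpose_mul_diagonal_mul_apply]
  simp only [of_apply, Fin.val_castSucc, Fin.val_succ, Fin.ext_iff]
  split_ifs <;> first | omega | ring
end

section
/- Let H be a positive-definite Hermitian form and J a skew-Hermitian form on ℂᵐ (i.e., J* = −J), and suppose δ ∈ ℂ and v ∈ ℂᵐ with v ≠ 0 satisfy δ·(v*Hv) + (1 + δ/2)·(v*Jv) = 0. Then |δ + 1| = 1. In particular, if A(t) = (t−1)·N^{sym} + (t+1)/2·J with N^{sym} real symmetric positive definite and J real skew-symmetric, then every t ∈ ℂ with det A(t) = 0 satisfies |t| = 1. -/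
/-!
Write `a = v*Hv`, which is real and positive, and `b = v*Jv`, which is purely imaginary, and put
`t = δ + 1`. The relation becomes `t (a + b/2) = a - b/2 = conj (a + b/2)`, and `a + b/2 ≠ 0`
because its real part is `a`; hence `|t| = 1`. For the real pencil `A(t)`, a kernel vector `v`
gives the same relation with `H` the complexification of `N`, which stays positive definite
since `N = BᵀB` with `B` invertible.
-/

theorem Complex.norm_eq_one_of_mul_eq_conj {t z : ℂ} (hz : z ≠ 0)
    (h : t * z = (starRingEnd ℂ) z) : ‖t‖ = 1 := by
  have hnorm := congrArg norm h
  rw [norm_mul, Complex.norm_conj] at hnorm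
  exact (mul_eq_right₀ (norm_ne_zero_iff.mpr hz)).mp hnorm

namespace Matrix

open ComplexOrder

variable {n : Type*}

theorem conjTranspose_map_ofReal {m : Type*} (A : Matrix m n ℝ) :
    (A.map Complex.ofReal)ᴴ = Aᵀ.map Complex.ofReal :=
  (conjTranspose_map _ fun x => (Complex.conj_ofReal x).symm).symm

variable [Fintype n]

theorem star_star_dotProduct_mulVec {α : Type*} [CommSemiring α] [StarRing α]
    (A : Matrix n n α) (v : n → α) :
    star (star v ⬝ᵥ A *ᵥ v) = star v ⬝ᵥ Aᴴ *ᵥ v := by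
  rw [← star_dotProduct, star_mulVec, dotProduct_mulVec]

theorem norm_eq_one_of_pencil_dotProduct_mulVec_eq_zero {H J : Matrix n n ℂ} (hH : H.PosDef)
    (hJ : Jᴴ = -J) {v : n → ℂ} (hv : v ≠ 0) {t : ℂ}
    (h : (t - 1) * (star v ⬝ᵥ H *ᵥ v) + (t + 1) / 2 * (star v ⬝ᵥ J *ᵥ v) = 0) :
    ‖t‖ = 1 := by
  set a := star v ⬝ᵥ H *ᵥ v
  set b := star v ⬝ᵥ J *ᵥ v
  have ha : star a = a := by rw [star_star_dotProduct_mulVec, hH.isHermitian.eq]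
  have hb : star b = -b := by rw [star_star_dotProduct_mulVec, hJ, neg_mulVec, dotProduct_neg]
  have ha0 : a ≠ 0 := (hH.dotProduct_mulVec_pos hv).ne'
  have hconj : (starRingEnd ℂ) (a + b / 2) = a - b / 2 := by
    rw [Complex.star_def] at ha hb
    rw [map_add, map_div₀, map_ofNat, ha, hb]
    ring
  refine Complex.norm_eq_one_of_mul_eq_conj (z := a + b / 2) ?_ ?_
  · intro hz
    rw [hz, map_zero] at hconj
    exact ha0 (by linear_combination (hz - hconj) / 2)
  · rw [hconj]; linear_combination h

theorem PosDef.map_ofReal {N : Matrix n n ℝ} (hN : N.PosDef) : (N.map Complex.ofReal).PosDef := by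
  classical
  obtain ⟨B, hB, rfl⟩ : ∃ B, IsUnit B ∧ N = star B * B := by
    open scoped MatrixOrder Matrix.Norms.L2Operator in
    exact CStarAlgebra.isStrictlyPositive_iff_eq_star_mul_self.mp hN.isStrictlyPositive
  have hmap : (star B * B).map Complex.ofReal =
      (B.map Complex.ofReal)ᴴ * B.map Complex.ofReal := by
    rw [conjTranspose_map_ofReal]
    exact Matrix.map_mul (f := Complex.ofRealHom)
  rw [hmap]
  refine .conjTranspose_mul_self _ (mulVec_injective_iff_isUnit.mpr ?_)
  exact hB.map Complex.ofRealHom.mapMatrix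

end Matrix

open Matrix ComplexOrder in
theorem zeros_on_unit_circle :
    (∀ (m : ℕ) (H J : Matrix (Fin m) (Fin m) ℂ), H.PosDef → Jᴴ = -J →
      ∀ (δ : ℂ) (v : Fin m → ℂ), v ≠ 0 →
        δ * (star v ⬝ᵥ H.mulVec v) + (1 + δ / 2) * (star v ⬝ᵥ J.mulVec v) = 0 →
        ‖δ + 1‖ = 1) ∧
    (∀ (m : ℕ) (N J : Matrix (Fin m) (Fin m) ℝ), N.PosDef → Jᵀ = -J →
      ∀ t : ℂ,
        ((t - 1) • (N.map (Complex.ofReal)) +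
          ((t + 1) / 2) • (J.map (Complex.ofReal))).det = 0 →
        ‖t‖ = 1) := by
  refine ⟨fun m H J hH hJ δ v hv h => ?_, fun m N J hN hJ t hdet => ?_⟩
  · exact norm_eq_one_of_pencil_dotProduct_mulVec_eq_zero hH hJ hv (by linear_combination h)
  · obtain ⟨v, hv, hker⟩ := exists_mulVec_eq_zero_iff.mpr hdet
    have hJ' : (J.map Complex.ofReal)ᴴ = -J.map Complex.ofReal := by
      rw [conjTranspose_map_ofReal, hJ, Matrix.map_neg _ Complex.ofReal_neg]
    refine norm_eq_one_of_pencil_dotProduct_mulVec_eq_zero hN.map_ofReal hJ' hv ?_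
    simpa only [add_mulVec, smul_mulVec, dotProduct_add, dotProduct_smul, smul_eq_mul,
      dotProduct_zero] using congrArg (star v ⬝ᵥ ·) hker
end
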